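/- arXiv:1612.05361 — 6 statements merged into one kernel-verified Lean document; each statement's English description precedes it below -/
import Mathlib

section
/- Let q be an invertible element of a field F and let A be an associative unital F-algebra containing elements e₁, e₂ satisfying e₁² = (q+q⁻¹)e₁, e₂² = (q+q⁻¹)e₂, e₁e₂e₁ = e₁, e₂e₁e₂ = e₂. For nonzero z, w define Ř_i(z,w) = 1 + ((w−z)/(q⁻¹z − qw))·e_i (assuming q⁻¹z ≠ qw). Then for generic z₁, z₂, z₃: Ř₁(z₂,z₃)Ř₂(z₁,z₃)Ř₁(z₁,z₂) = Ř₂(z₁,z₂)Ř₁(z₁,z₃)Ř₂(z₂,z₃), and Ř_i(z,w)Ř_i(w,z) = 1. -/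
/-!
Expanding `(1 + a e₁)(1 + b e₂)(1 + c e₁)` with the Temperley–Lieb relations gives
`1 + (a + c + acβ + abc) e₁ + b e₂ + ab e₁e₂ + bc e₂e₁`, and the mirrored product differs only by
exchanging the coefficients of `e₁` and `e₂`. So the Yang–Baxter equation reduces to the scalar
identity `a + c + acβ + abc = b`, and unitarity to `u + v + uvβ = 0`; both are rational-function
identities for the trigonometric weight once `q⁻¹z − qw` is cleared to `z − q²w`.
-/

section TemperleyLieb

variable {K A : Type*} [CommRing K] [Ring A] [Algebra K A] {β : K} {e e' : A}

theorem one_add_smul_mul_one_add_smul (he : e * e = β • e) (u v : K) :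
    (1 + u • e) * (1 + v • e) = 1 + (u + v + u * v * β) • e := by
  simp only [add_mul, mul_add, one_mul, mul_one, smul_mul_assoc, mul_smul_comm, smul_smul, he]
  module

theorem one_add_smul_mul_one_add_smul_eq_one (he : e * e = β • e) {u v : K}
    (h : u + v + u * v * β = 0) : (1 + u • e) * (1 + v • e) = 1 := by
  rw [one_add_smul_mul_one_add_smul he, h, zero_smul, add_zero]

theorem one_add_smul_mul_one_add_smul_mul_one_add_smul (he : e * e = β • e)
    (hee'e : e * e' * e = e) (a b c : K) :
    (1 + a • e) * (1 + b • e') * (1 + c • e) =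
      1 + (a + c + a * c * β + a * b * c) • e + b • e' + (a * b) • (e * e') +
        (b * c) • (e' * e) := by
  simp only [add_mul, mul_add, one_mul, mul_one, smul_mul_assoc, mul_smul_comm, smul_smul,
    he, hee'e]
  module

theorem one_add_smul_yangBaxter (he : e * e = β • e) (he' : e' * e' = β • e')
    (hee'e : e * e' * e = e) (he'ee' : e' * e * e' = e') {a b c : K}
    (h : a + c + a * c * β + a * b * c = b) :
    (1 + a • e) * (1 + b • e') * (1 + c • e) = (1 + c • e') * (1 + b • e) * (1 + a • e') := by
  have h' : c + a + c * a * β + c * b * a = b := by linear_combination h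
  rw [one_add_smul_mul_one_add_smul_mul_one_add_smul he hee'e,
    one_add_smul_mul_one_add_smul_mul_one_add_smul he' he'ee', h, h']
  module

end TemperleyLieb

section TrigonometricWeight

variable {F : Type*} [Field F] {q : F}

def trigWeight (q z w : F) : F := (w - z) / (q⁻¹ * z - q * w)

theorem mul_inv_mul_sub_mul (hq : q ≠ 0) (z w : F) :
    q * (q⁻¹ * z - q * w) = z - q ^ 2 * w := by
  field_simp

theorem trigWeight_eq (hq : q ≠ 0) (z w : F) :
    trigWeight q z w = q * (w - z) / (z - q ^ 2 * w) := by
  rw [trigWeight, ← mul_inv_mul_sub_mul hq, mul_div_mul_left _ _ hq]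

theorem sub_sq_mul_ne_zero_of_inv_mul_sub_mul_ne_zero (hq : q ≠ 0) {z w : F}
    (h : q⁻¹ * z - q * w ≠ 0) : z - q ^ 2 * w ≠ 0 :=
  mul_inv_mul_sub_mul hq z w ▸ mul_ne_zero hq h

theorem trigWeight_unitarity (hq : q ≠ 0) {z w : F} (hzw : q⁻¹ * z - q * w ≠ 0)
    (hwz : q⁻¹ * w - q * z ≠ 0) :
    trigWeight q z w + trigWeight q w z + trigWeight q z w * trigWeight q w z * (q + q⁻¹) = 0 := by
  have := sub_sq_mul_ne_zero_of_inv_mul_sub_mul_ne_zero hq hzw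
  have := sub_sq_mul_ne_zero_of_inv_mul_sub_mul_ne_zero hq hwz
  rw [trigWeight_eq hq, trigWeight_eq hq]
  field_simp
  ring

theorem trigWeight_yangBaxter (hq : q ≠ 0) {z1 z2 z3 : F} (h23 : q⁻¹ * z2 - q * z3 ≠ 0)
    (h13 : q⁻¹ * z1 - q * z3 ≠ 0) (h12 : q⁻¹ * z1 - q * z2 ≠ 0) :
    trigWeight q z2 z3 + trigWeight q z1 z2 +
        trigWeight q z2 z3 * trigWeight q z1 z2 * (q + q⁻¹) +
      trigWeight q z2 z3 * trigWeight q z1 z3 * trigWeight q z1 z2 = trigWeight q z1 z3 := by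
  have := sub_sq_mul_ne_zero_of_inv_mul_sub_mul_ne_zero hq h23
  have := sub_sq_mul_ne_zero_of_inv_mul_sub_mul_ne_zero hq h13
  have := sub_sq_mul_ne_zero_of_inv_mul_sub_mul_ne_zero hq h12
  simp only [trigWeight_eq hq]
  field_simp
  ring

end TrigonometricWeight

theorem stmt2_general (F : Type*) [Field F] (A : Type*) [Ring A] [Algebra F A]
    (q : F) (hq : q ≠ 0) (e1 e2 : A)
    (he1 : e1 * e1 = (q + q⁻¹) • e1) (he2 : e2 * e2 = (q + q⁻¹) • e2)
    (h121 : e1 * e2 * e1 = e1) (h212 : e2 * e1 * e2 = e2)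
    (R : A → F → F → A)
    (hR : ∀ (e : A) (z w : F), R e z w = 1 + ((w - z) / (q⁻¹ * z - q * w)) • e)
    (z1 z2 z3 : F)
    (hd23 : q⁻¹ * z2 - q * z3 ≠ 0) (hd13 : q⁻¹ * z1 - q * z3 ≠ 0)
    (hd12 : q⁻¹ * z1 - q * z2 ≠ 0) :
    (R e1 z2 z3 * R e2 z1 z3 * R e1 z1 z2 =
      R e2 z1 z2 * R e1 z1 z3 * R e2 z2 z3) ∧
    (∀ z w : F, z ≠ 0 → w ≠ 0 → q⁻¹ * z - q * w ≠ 0 → q⁻¹ * w - q * z ≠ 0 →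
      R e1 z w * R e1 w z = 1 ∧ R e2 z w * R e2 w z = 1) := by
  have hR' : ∀ (e : A) (z w : F), R e z w = 1 + trigWeight q z w • e := hR
  simp only [hR']
  refine ⟨one_add_smul_yangBaxter he1 he2 h121 h212 (trigWeight_yangBaxter hq hd23 hd13 hd12),
    fun z w _ _ hzw hwz => ⟨?_, ?_⟩⟩
  · exact one_add_smul_mul_one_add_smul_eq_one he1 (trigWeight_unitarity hq hzw hwz)
  · exact one_add_smul_mul_one_add_smul_eq_one he2 (trigWeight_unitarity hq hzw hwz)

/-- Yang–Baxter and unitarity for the trigonometric Temperley–Lieb R-matrix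
`Ř_i(z,w) = 1 + ((w−z)/(q⁻¹z − qw)) e_i`, with loop weight `β = q + q⁻¹`. -/
theorem stmt2 (F : Type*) [Field F] (A : Type*) [Ring A] [Algebra F A]
    (q : F) (hq : q ≠ 0) (e1 e2 : A)
    (he1 : e1 * e1 = (q + q⁻¹) • e1) (he2 : e2 * e2 = (q + q⁻¹) • e2)
    (h121 : e1 * e2 * e1 = e1) (h212 : e2 * e1 * e2 = e2)
    (R : A → F → F → A)
    (hR : ∀ (e : A) (z w : F), R e z w = 1 + ((w - z) / (q⁻¹ * z - q * w)) • e)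
    (z1 z2 z3 : F) (hz1 : z1 ≠ 0) (hz2 : z2 ≠ 0) (hz3 : z3 ≠ 0)
    (hd23 : q⁻¹ * z2 - q * z3 ≠ 0) (hd13 : q⁻¹ * z1 - q * z3 ≠ 0)
    (hd12 : q⁻¹ * z1 - q * z2 ≠ 0) :
    (R e1 z2 z3 * R e2 z1 z3 * R e1 z1 z2 =
      R e2 z1 z2 * R e1 z1 z3 * R e2 z2 z3) ∧
    (∀ z w : F, z ≠ 0 → w ≠ 0 → q⁻¹ * z - q * w ≠ 0 → q⁻¹ * w - q * z ≠ 0 →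
      R e1 z w * R e1 w z = 1 ∧ R e2 z w * R e2 w z = 1) :=
  stmt2_general F A q hq e1 e2 he1 he2 h121 h212 R hR z1 z2 z3 hd23 hd13 hd12
end

section
/- Let t be an element of a field F and let A be an associative unital F-algebra containing elements e₁, e₂, f₁, f₂ satisfying: e_i² = (1+t)e_i, f_i² = −f_i, f_ie_i = e_if_i = −e_i, e₁e₂e₁ = e₁, e₂e₁e₂ = e₂, f₁f₂f₁ = f₂f₁f₂, f₁e₂e₁ = f₂e₁, f₂e₁e₂ = f₁e₂, e₁e₂f₁ = e₁f₂, e₂e₁f₂ = e₂f₁. For nonzero z, w define Ř_i(z,w) = 1 + ((1−z/w)/(1−t·w/z))e_i + (1−z/w)f_i. Then the Yang–Baxter equation Ř₁(z₂,z₃)Ř₂(z₁,z₃)Ř₁(z₁,z₂) = Ř₂(z₁,z₂)Ř₁(z₁,z₃)Ř₂(z₂,z₃) holds for generic z₁, z₂, z₃. -/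
/-!
Multiplying `Ř(z, w)` by `w (z - t w)` clears all denominators and gives an R-matrix that is
polynomial in the spectral parameters. Scalars are central, so the Yang–Baxter equation for `Ř`
is equivalent to the one for the cleared R-matrix. That one is a polynomial identity. Expand both
sides into words of length at most three in `e₁, e₂, f₁, f₂`, reduce the words with the defining
relations and a few relations derived from them, and compare coefficients.
-/

namespace CrossingTL

variable {F A : Type*} [Field F] [Ring A] [Algebra F A]

structure Relations (t : F) (e1 e2 f1 f2 : A) : Prop where
  e1_mul_e1 : e1 * e1 = (1 + t) • e1
  e2_mul_e2 : e2 * e2 = (1 + t) • e2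
  f1_mul_f1 : f1 * f1 = -f1
  f2_mul_f2 : f2 * f2 = -f2
  f1_mul_e1 : f1 * e1 = -e1
  e1_mul_f1 : e1 * f1 = -e1
  f2_mul_e2 : f2 * e2 = -e2
  e2_mul_f2 : e2 * f2 = -e2
  e1_mul_e2_mul_e1 : e1 * e2 * e1 = e1
  e2_mul_e1_mul_e2 : e2 * e1 * e2 = e2
  f1_mul_f2_mul_f1 : f1 * f2 * f1 = f2 * f1 * f2
  f1_mul_e2_mul_e1 : f1 * e2 * e1 = f2 * e1
  f2_mul_e1_mul_e2 : f2 * e1 * e2 = f1 * e2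
  e1_mul_e2_mul_f1 : e1 * e2 * f1 = e1 * f2
  e2_mul_e1_mul_f2 : e2 * e1 * f2 = e2 * f1

namespace Relations

variable {t : F} {e1 e2 f1 f2 : A}

theorem swap (h : Relations t e1 e2 f1 f2) : Relations t e2 e1 f2 f1 :=
  ⟨h.e2_mul_e2, h.e1_mul_e1, h.f2_mul_f2, h.f1_mul_f1, h.f2_mul_e2, h.e2_mul_f2, h.f1_mul_e1,
    h.e1_mul_f1, h.e2_mul_e1_mul_e2, h.e1_mul_e2_mul_e1, h.f1_mul_f2_mul_f1.symm,
    h.f2_mul_e1_mul_e2, h.f1_mul_e2_mul_e1, h.e2_mul_e1_mul_f2, h.e1_mul_e2_mul_f1⟩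

theorem e1_mul_f2_mul_e1 (h : Relations t e1 e2 f1 f2) : e1 * f2 * e1 = -e1 := by
  rw [mul_assoc, ← h.f1_mul_e2_mul_e1, ← mul_assoc, ← mul_assoc, h.e1_mul_f1, neg_mul, neg_mul,
    h.e1_mul_e2_mul_e1]

theorem e1_mul_f2_mul_f1 (h : Relations t e1 e2 f1 f2) : e1 * f2 * f1 = -(e1 * f2) := by
  rw [← h.e1_mul_e2_mul_f1, mul_assoc, h.f1_mul_f1, mul_neg]

theorem f1_mul_f2_mul_e1 (h : Relations t e1 e2 f1 f2) : f1 * f2 * e1 = -(f2 * e1) := by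
  rw [mul_assoc, ← h.f1_mul_e2_mul_e1, ← mul_assoc, ← mul_assoc, h.f1_mul_f1, neg_mul, neg_mul,
    h.f1_mul_e2_mul_e1]

theorem f1_mul_e2_mul_f1 (h : Relations t e1 e2 f1 f2) : f1 * e2 * f1 = f2 * e1 * f2 := by
  rw [mul_assoc, ← h.e2_mul_e1_mul_f2, ← mul_assoc, ← mul_assoc, h.f1_mul_e2_mul_e1]

end Relations

/-- `w (z - t w) • Ř(z, w)`. -/
def clearedR (t : F) (e f : A) (z w : F) : A :=
  (w * (z - t * w)) • 1 + (z * (w - z)) • e + ((z - t * w) * (w - z)) • f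

theorem Relations.clearedR_ybe {t : F} {e1 e2 f1 f2 : A} (h : Relations t e1 e2 f1 f2)
    (z1 z2 z3 : F) :
    clearedR t e1 f1 z2 z3 * clearedR t e2 f2 z1 z3 * clearedR t e1 f1 z1 z2 =
      clearedR t e2 f2 z1 z2 * clearedR t e1 f1 z1 z3 * clearedR t e2 f2 z2 z3 := by
  simp only [clearedR, mul_add, add_mul, one_mul, mul_one, smul_mul_assoc, mul_smul_comm]
  simp only [h.e1_mul_e2_mul_e1, h.e2_mul_e1_mul_e2, h.f1_mul_f2_mul_f1, h.f1_mul_e2_mul_e1,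
    h.f2_mul_e1_mul_e2, h.e1_mul_e2_mul_f1, h.e2_mul_e1_mul_f2, h.e1_mul_f2_mul_e1,
    h.e1_mul_f2_mul_f1, h.f1_mul_f2_mul_e1, h.f1_mul_e2_mul_f1, h.swap.e1_mul_f2_mul_e1,
    h.swap.e1_mul_f2_mul_f1, h.swap.f1_mul_f2_mul_e1, h.e1_mul_f1, h.f1_mul_e1, h.e2_mul_f2,
    h.f2_mul_e2, h.e1_mul_e1, h.e2_mul_e2, h.f1_mul_f1, h.f2_mul_f2, smul_neg, smul_smul]
  match_scalars <;> ring

theorem one_add_smul_add_smul_eq_inv_smul_clearedR {t z w : F} (e f : A) (hz : z ≠ 0)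
    (hw : w ≠ 0) (hd : 1 - t * w / z ≠ 0) :
    1 + ((1 - z / w) / (1 - t * w / z)) • e + (1 - z / w) • f =
      (w * (z - t * w))⁻¹ • clearedR t e f z w := by
  -- stated with `w * t`, the normal form `field_simp` looks for
  have hzw : z - w * t ≠ 0 := by
    rw [one_sub_div hz, mul_comm] at hd
    exact (div_ne_zero_iff.mp hd).1
  have he : w * (z - t * w) * ((1 - z / w) / (1 - t * w / z)) = z * (w - z) := by
    field_simp
  have hf : w * (z - t * w) * (1 - z / w) = (z - t * w) * (w - z) := by
    field_simp
  rw [eq_inv_smul_iff₀ (mul_ne_zero hw (mul_comm t w ▸ hzw)), clearedR, smul_add, smul_add,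
    smul_smul, smul_smul, he, hf]

end CrossingTL

/-- Yang–Baxter equation for the crossing Temperley–Lieb R-matrix
`Ř_i(z,w) = 1 + ((1−z/w)/(1−t·w/z)) e_i + (1−z/w) f_i`, loop weight `β = 1 + t`. -/
theorem stmt3 (F : Type*) [Field F] (A : Type*) [Ring A] [Algebra F A]
    (t : F) (e1 e2 f1 f2 : A)
    (he1 : e1 * e1 = (1 + t) • e1) (he2 : e2 * e2 = (1 + t) • e2)
    (hf1 : f1 * f1 = -f1) (hf2 : f2 * f2 = -f2)
    (hfe1 : f1 * e1 = -e1) (hef1 : e1 * f1 = -e1)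
    (hfe2 : f2 * e2 = -e2) (hef2 : e2 * f2 = -e2)
    (h121 : e1 * e2 * e1 = e1) (h212 : e2 * e1 * e2 = e2)
    (hbraid : f1 * f2 * f1 = f2 * f1 * f2)
    (hm1 : f1 * e2 * e1 = f2 * e1) (hm2 : f2 * e1 * e2 = f1 * e2)
    (hm3 : e1 * e2 * f1 = e1 * f2) (hm4 : e2 * e1 * f2 = e2 * f1)
    (R : A → A → F → F → A)
    (hR : ∀ (e f : A) (z w : F),
      R e f z w = 1 + ((1 - z / w) / (1 - t * w / z)) • e + (1 - z / w) • f)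
    (z1 z2 z3 : F) (hz1 : z1 ≠ 0) (hz2 : z2 ≠ 0) (hz3 : z3 ≠ 0)
    (hd23 : 1 - t * z3 / z2 ≠ 0) (hd13 : 1 - t * z3 / z1 ≠ 0)
    (hd12 : 1 - t * z2 / z1 ≠ 0) :
    R e1 f1 z2 z3 * R e2 f2 z1 z3 * R e1 f1 z1 z2 =
      R e2 f2 z1 z2 * R e1 f1 z1 z3 * R e2 f2 z2 z3 := by
  have h : CrossingTL.Relations t e1 e2 f1 f2 :=
    ⟨he1, he2, hf1, hf2, hfe1, hef1, hfe2, hef2, h121, h212, hbraid, hm1, hm2, hm3, hm4⟩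
  simp only [hR, CrossingTL.one_add_smul_add_smul_eq_inv_smul_clearedR _ _ hz2 hz3 hd23,
    CrossingTL.one_add_smul_add_smul_eq_inv_smul_clearedR _ _ hz1 hz3 hd13,
    CrossingTL.one_add_smul_add_smul_eq_inv_smul_clearedR _ _ hz1 hz2 hd12, smul_mul_smul_comm,
    h.clearedR_ybe]
  congr 1
  ring
end

section
/- Let t be an element of a field F and let A be an associative unital F-algebra containing elements e, f satisfying e² = (1+t)e, f² = −f, fe = ef = −e. For nonzero z, w with z ≠ tw and w ≠ tz, define Ř(z,w) = 1 + ((1−z/w)/(1−t·w/z))e + (1−z/w)f. Then Ř(z,w)Ř(w,z) = 1. -/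
/-!
`Ř(z,w)` depends only on the ratio `x = z / w`, and since `ef = fe` the span of `1, e, f` is a
commutative subalgebra with product
`(1 + a e + b f)(1 + a' e + b' f) = 1 + (a + a' + (1+t)aa' − ab' − ba') e + (b + b' − bb') f`.
For `Ř(x) Ř(x⁻¹)` the `f`-coefficient vanishes because `(1 − x)(1 − x⁻¹) = 2 − x − x⁻¹`, and the
`e`-coefficient vanishes by a rational-function identity in `x`.
-/

structure IsCrossingTLPair {R A : Type*} [CommRing R] [Ring A] [Algebra R A]
    (t : R) (e f : A) : Prop where
  e_mul_self : e * e = (1 + t) • e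
  f_mul_self : f * f = -f
  f_mul_e : f * e = -e
  e_mul_f : e * f = -e

namespace IsCrossingTLPair

variable {R A : Type*} [CommRing R] [Ring A] [Algebra R A] {t : R} {e f : A}

theorem one_add_smul_add_smul_mul (h : IsCrossingTLPair t e f) (a b a' b' : R) :
    (1 + a • e + b • f) * (1 + a' • e + b' • f) =
      1 + (a + a' + (1 + t) * a * a' - a * b' - b * a') • e + (b + b' - b * b') • f := by
  simp only [mul_add, add_mul, one_mul, mul_one, smul_mul_smul_comm, h.e_mul_self, h.f_mul_self,
    h.e_mul_f, h.f_mul_e, smul_smul, smul_neg]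
  module

end IsCrossingTLPair

def crossingRMatrix {F A : Type*} [Field F] [Ring A] [Algebra F A] (t : F) (e f : A) (x : F) :
    A :=
  1 + ((1 - x) / (1 - t * x⁻¹)) • e + (1 - x) • f

theorem crossingRMatrix_mul_crossingRMatrix_inv {F A : Type*} [Field F] [Ring A] [Algebra F A]
    {t : F} {e f : A} (h : IsCrossingTLPair t e f) {x : F} (hx : x ≠ 0) (hxt : x ≠ t)
    (hxt_inv : x⁻¹ ≠ t) :
    crossingRMatrix t e f x * crossingRMatrix t e f x⁻¹ = 1 := by
  have hx_sub : x - t ≠ 0 := sub_ne_zero.mpr hxt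
  have hxt_sub : 1 - x * t ≠ 0 := by
    rw [sub_ne_zero]
    exact fun h1 => hxt_inv (inv_eq_of_mul_eq_one_left (mul_comm x t ▸ h1.symm))
  have he_coeff : (1 - x) / (1 - t * x⁻¹) + (1 - x⁻¹) / (1 - t * x⁻¹⁻¹) +
      (1 + t) * ((1 - x) / (1 - t * x⁻¹)) * ((1 - x⁻¹) / (1 - t * x⁻¹⁻¹)) -
      (1 - x) / (1 - t * x⁻¹) * (1 - x⁻¹) - (1 - x) * ((1 - x⁻¹) / (1 - t * x⁻¹⁻¹)) = 0 := by
    rw [inv_inv]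
    field_simp
    ring
  have hf_coeff : (1 - x) + (1 - x⁻¹) - (1 - x) * (1 - x⁻¹) = 0 := by
    field_simp
    ring
  rw [crossingRMatrix, crossingRMatrix, h.one_add_smul_add_smul_mul, he_coeff, hf_coeff,
    zero_smul, zero_smul, add_zero, add_zero]

/-- Unitarity for the crossing Temperley–Lieb R-matrix
`Ř(z,w) = 1 + ((1−z/w)/(1−t·w/z)) e + (1−z/w) f`. -/
theorem stmt4 (F : Type*) [Field F] (A : Type*) [Ring A] [Algebra F A]
    (t : F) (e f : A)
    (he : e * e = (1 + t) • e) (hf : f * f = -f)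
    (hfe : f * e = -e) (hef : e * f = -e)
    (z w : F) (hz : z ≠ 0) (hw : w ≠ 0) (hzw : z ≠ t * w) (hwz : w ≠ t * z) :
    (1 + ((1 - z / w) / (1 - t * w / z)) • e + (1 - z / w) • f) *
      (1 + ((1 - w / z) / (1 - t * z / w)) • e + (1 - w / z) • f) = 1 := by
  have hratio : z / w ≠ t := fun h => hzw ((div_eq_iff hw).mp h)
  have hratio' : (z / w)⁻¹ ≠ t := fun h => hwz ((div_eq_iff hz).mp (by rwa [inv_div] at h))
  have := crossingRMatrix_mul_crossingRMatrix_inv ⟨he, hf, hfe, hef⟩ (div_ne_zero hz hw)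
    hratio hratio'
  simpa only [crossingRMatrix, inv_div, mul_div_assoc] using this
end

section
/- Let V be an n-dimensional vector space over a field, u : V → V linear, and 0 ≤ k ≤ n. There exists a k-dimensional subspace W with range(u) ⊆ W ⊆ ker(u) if and only if u ∘ u = 0 and rank(u) ≤ min(k, n−k). -/
lemma aux_exists_between {K V : Type*} [Field K] [AddCommGroup V] [Module K V]
    [FiniteDimensional K V] (p q : Submodule K V) (hpq : p ≤ q) (k : ℕ)
    (h1 : Module.finrank K p ≤ k) (h2 : k ≤ Module.finrank K q) :
    ∃ W : Submodule K V, Module.finrank K W = k ∧ p ≤ W ∧ W ≤ q := by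
  induction' hd : k - Module.finrank K p with d ih generalizing p
  · exact ⟨p, by omega, le_refl p, hpq⟩
  · have hlt : Module.finrank K p < Module.finrank K q := by omega
    have hne : p ≠ q := fun h => by rw [h] at hlt; omega
    have hplt : p < q := lt_of_le_of_ne hpq hne
    obtain ⟨x, hxq, hxp⟩ := SetLike.exists_of_lt hplt
    set p' := p ⊔ (K ∙ x) with hp'
    have hinf : p ⊓ (K ∙ x) = ⊥ := by
      rw [eq_bot_iff]
      rintro y ⟨hyp, hyx⟩
      obtain ⟨c, rfl⟩ := Submodule.mem_span_singleton.mp hyx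
      rcases eq_or_ne c 0 with rfl | hc
      · simp
      · refine absurd ?_ hxp
        have := p.smul_mem c⁻¹ hyp
        rwa [smul_smul, inv_mul_cancel₀ hc, one_smul] at this
    have hdim : Module.finrank K p' = Module.finrank K p + 1 := by
      have := Submodule.finrank_sup_add_finrank_inf_eq p (K ∙ x)
      rw [hinf] at this
      simp only [finrank_bot, add_zero] at this
      rw [hp', this, finrank_span_singleton (by rintro rfl; exact hxp p.zero_mem)]
    have hp'q : p' ≤ q := sup_le hpq ((Submodule.span_singleton_le_iff_mem x q).mpr hxq)
    obtain ⟨W, hW, hpW, hWq⟩ := ih p' hp'q (by omega) (by omega)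
    exact ⟨W, hW, le_trans le_sup_left hpW, hWq⟩

/-- There exists a `k`-dimensional subspace `W` with `range u ⊆ W ⊆ ker u`
iff `u² = 0` and `rank u ≤ min(k, n−k)`. -/
theorem stmt9 (K V : Type*) [Field K] [AddCommGroup V] [Module K V]
    [FiniteDimensional K V] (u : V →ₗ[K] V) (k : ℕ)
    (hk : k ≤ Module.finrank K V) :
    (∃ W : Submodule K V, Module.finrank K W = k ∧
        LinearMap.range u ≤ W ∧ W ≤ LinearMap.ker u) ↔
      (u ∘ₗ u = 0 ∧
        Module.finrank K (LinearMap.range u) ≤ min k (Module.finrank K V - k)) := by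
  have hrn := LinearMap.finrank_range_add_finrank_ker u
  constructor
  · rintro ⟨W, hWk, h1, h2⟩
    have hr : Module.finrank K (LinearMap.range u) ≤ k := hWk ▸ Submodule.finrank_mono h1
    have hker : k ≤ Module.finrank K (LinearMap.ker u) := hWk ▸ Submodule.finrank_mono h2
    refine ⟨?_, ?_⟩
    · ext x
      exact h2 (h1 (LinearMap.mem_range_self u x))
    · omega
  · rintro ⟨hu2, hrank⟩
    have hle : LinearMap.range u ≤ LinearMap.ker u := by
      rintro _ ⟨x, rfl⟩
      exact congrFun (congrArg DFunLike.coe hu2) x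
    refine aux_exists_between _ _ hle k (by omega) (by omega)
end

section
/- In ℂ⁶ with coordinates (M₁₂, M₂₄, M₃₄, M₄₆, M₅₆, M₆₂), let L be the zero set of the equations M₁₂M₂₄ = M₃₄M₄₆, M₃₄M₄₆ = M₅₆M₆₂, (M₁₂ + M₄₆M₆₂)M₃₄ = 0, (M₃₄ + M₆₂M₂₄)M₅₆ = 0, (M₅₆ + M₂₄M₄₆)M₁₂ = 0. Then L equals the union of the following five irreducible closed subsets: {M₁₂ + M₄₆M₆₂ = M₃₄ + M₆₂M₂₄ = M₅₆ + M₂₄M₄₆ = 0}, {M₁₂ = M₃₄ = M₅₆ = 0}, {M₂₄ = M₃₄ = M₅₆ = 0}, {M₁₂ = M₃₄ = M₆₂ = 0}, and {M₁₂ = M₄₆ = M₅₆ = 0}. -/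
/-- Irreducible component decomposition of the hexagon Lagrangian scheme `L_ρ`
in `ℂ⁶` with coordinates `(M₁₂, M₂₄, M₃₄, M₄₆, M₅₆, M₆₂) = (m 0, …, m 5)`. -/
theorem stmt12 :
    {m : Fin 6 → ℂ |
        m 0 * m 1 = m 2 * m 3 ∧ m 2 * m 3 = m 4 * m 5 ∧
        (m 0 + m 3 * m 5) * m 2 = 0 ∧
        (m 2 + m 5 * m 1) * m 4 = 0 ∧
        (m 4 + m 1 * m 3) * m 0 = 0} =
      {m : Fin 6 → ℂ | m 0 + m 3 * m 5 = 0 ∧ m 2 + m 5 * m 1 = 0 ∧ m 4 + m 1 * m 3 = 0} ∪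
      {m : Fin 6 → ℂ | m 0 = 0 ∧ m 2 = 0 ∧ m 4 = 0} ∪
      {m : Fin 6 → ℂ | m 1 = 0 ∧ m 2 = 0 ∧ m 4 = 0} ∪
      {m : Fin 6 → ℂ | m 0 = 0 ∧ m 2 = 0 ∧ m 5 = 0} ∪
      {m : Fin 6 → ℂ | m 0 = 0 ∧ m 3 = 0 ∧ m 4 = 0} := by
  ext m
  simp only [Set.mem_setOf_eq, Set.mem_union]
  constructor
  · rintro ⟨h1, h2, h3, h4, h5⟩
    by_cases c0 : m 0 = 0 <;> by_cases c1 : m 1 = 0 <;> by_cases c2 : m 2 = 0 <;>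
      by_cases c3 : m 3 = 0 <;> by_cases c4 : m 4 = 0 <;> by_cases c5 : m 5 = 0 <;>
        simp_all [mul_eq_zero] <;> tauto
  · rintro ((((⟨h1, h2, h3⟩ | ⟨h1, h2, h3⟩) | ⟨h1, h2, h3⟩) | ⟨h1, h2, h3⟩) | ⟨h1, h2, h3⟩)
    · exact ⟨by linear_combination m 1 * h1 - m 3 * h2,
        by linear_combination m 3 * h2 - m 5 * h3,
        by linear_combination m 2 * h1, by linear_combination m 4 * h2,
        by linear_combination m 0 * h3⟩
    all_goals simp_all
end

section
/- Let π be a noncrossing perfect matching of {1,…,2k}. Say π contains the forbidden pattern if there exist three arcs (i₁,j₁), (i₂,j₂), (i₃,j₃) of π with i₁ < i₂ < j₂ < i₃ < j₃ < j₁ (one arc containing two disjoint arcs). Say π is a series of nested arcs if its arcs can be partitioned into groups, each group totally ordered by nesting (any two arcs in the same group are nested), with the intervals spanned by distinct groups pairwise disjoint. Then π avoids the forbidden pattern if and only if π is a series of nested arcs. -/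
/-!
A noncrossing matching is laminar: two distinct arcs are nested or disjoint. Group every arc
with its outermost enclosing arc. Two arcs below the same outermost arc cannot be disjoint
(that would be the forbidden pattern), so they are nested; two distinct outermost arcs are
disjoint, since otherwise one would enclose the other. Conversely, in a series of nested arcs an
arc enclosing two disjoint arcs meets both, so all three lie in one group, forcing the two inner
arcs to be nested.
-/

/-- A noncrossing perfect matching of `{1,…,2k}`. -/
def IsNCPerfectMatching (k : ℕ) (M : Finset (ℕ × ℕ)) : Prop :=
  (∀ p ∈ M, 1 ≤ p.1 ∧ p.1 < p.2 ∧ p.2 ≤ 2 * k) ∧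
  (∀ v : ℕ, 1 ≤ v → v ≤ 2 * k → ∃! p : ℕ × ℕ, p ∈ M ∧ (p.1 = v ∨ p.2 = v)) ∧
  (∀ p ∈ M, ∀ q ∈ M, ¬ (p.1 < q.1 ∧ q.1 < p.2 ∧ p.2 < q.2))

/-- Two arcs are nested if one lies strictly inside the other. -/
def Nested (p q : ℕ × ℕ) : Prop :=
  (q.1 < p.1 ∧ p.2 < q.2) ∨ (p.1 < q.1 ∧ q.2 < p.2)

/-- The forbidden pattern: an arc containing two disjoint arcs. -/
def ContainsForbidden (M : Finset (ℕ × ℕ)) : Prop :=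
  ∃ a ∈ M, ∃ b ∈ M, ∃ c ∈ M, a.1 < b.1 ∧ b.2 < c.1 ∧ c.2 < a.2

/-- `M` is a series of nested arcs: arcs can be grouped so that arcs in the same
group are nested, and the intervals spanned by distinct groups are disjoint. -/
def SeriesOfNestedArcs (M : Finset (ℕ × ℕ)) : Prop :=
  ∃ g : ℕ × ℕ → ℕ, ∀ p ∈ M, ∀ q ∈ M, p ≠ q →
    (g p = g q → Nested p q) ∧ (g p ≠ g q → (p.2 < q.1 ∨ q.2 < p.1))

def Covers (o p : ℕ × ℕ) : Prop :=
  o.1 ≤ p.1 ∧ p.2 ≤ o.2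

def Separated (p q : ℕ × ℕ) : Prop :=
  p.2 < q.1 ∨ q.2 < p.1

structure IsLaminar (M : Finset (ℕ × ℕ)) : Prop where
  fst_lt_snd : ∀ p ∈ M, p.1 < p.2
  nested_or_separated : ∀ p ∈ M, ∀ q ∈ M, p ≠ q → Nested p q ∨ Separated p q

namespace IsNCPerfectMatching

variable {k : ℕ} {M : Finset (ℕ × ℕ)}

theorem eq_of_endpoint_eq (h : IsNCPerfectMatching k M) {p q : ℕ × ℕ} (hp : p ∈ M)
    (hq : q ∈ M) {v : ℕ} (hpv : p.1 = v ∨ p.2 = v) (hqv : q.1 = v ∨ q.2 = v) : p = q := by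
  have hbounds := h.1 p hp
  obtain ⟨r, -, hr⟩ := h.2.1 v (by omega) (by omega)
  rw [hr p ⟨hp, hpv⟩, hr q ⟨hq, hqv⟩]

theorem isLaminar (h : IsNCPerfectMatching k M) : IsLaminar M where
  fst_lt_snd p hp := (h.1 p hp).2.1
  nested_or_separated p hp q hq hpq := by
    have hp' := (h.1 p hp).2.1
    have hq' := (h.1 q hq).2.1
    have h11 : p.1 ≠ q.1 := fun e => hpq (h.eq_of_endpoint_eq hp hq (.inl rfl) (.inl e.symm))
    have h12 : p.1 ≠ q.2 := fun e => hpq (h.eq_of_endpoint_eq hp hq (.inl rfl) (.inr e.symm))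
    have h21 : p.2 ≠ q.1 := fun e => hpq (h.eq_of_endpoint_eq hp hq (.inr rfl) (.inl e.symm))
    have h22 : p.2 ≠ q.2 := fun e => hpq (h.eq_of_endpoint_eq hp hq (.inr rfl) (.inr e.symm))
    have hpq_nc := h.2.2 p hp q hq
    have hqp_nc := h.2.2 q hq p hp
    unfold Nested Separated
    omega

end IsNCPerfectMatching

namespace IsLaminar

variable {M : Finset (ℕ × ℕ)}

theorem eq_of_fst_eq (hM : IsLaminar M) {p q : ℕ × ℕ} (hp : p ∈ M) (hq : q ∈ M)
    (h : p.1 = q.1) : p = q := by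
  by_contra hpq
  have := hM.fst_lt_snd p hp
  have := hM.fst_lt_snd q hq
  rcases hM.nested_or_separated p hp q hq hpq with hn | hs
  · unfold Nested at hn; omega
  · unfold Separated at hs; omega

theorem nested_of_covers (hM : IsLaminar M) {o p : ℕ × ℕ} (ho : o ∈ M) (hp : p ∈ M)
    (hop : o ≠ p) (hcov : Covers o p) : o.1 < p.1 ∧ p.2 < o.2 := by
  have := hM.fst_lt_snd p hp
  unfold Covers at hcov
  rcases hM.nested_or_separated o ho p hp hop with hn | hs
  · unfold Nested at hn; omega
  · unfold Separated at hs; omega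

theorem containsForbidden_of_covers (hM : IsLaminar M) {o p q : ℕ × ℕ} (ho : o ∈ M)
    (hp : p ∈ M) (hq : q ∈ M) (hop : Covers o p) (hoq : Covers o q) (hpq : p.2 < q.1) :
    ContainsForbidden M := by
  have := hM.fst_lt_snd p hp
  have := hM.fst_lt_snd q hq
  have hop' := hM.nested_of_covers ho hp (by rintro rfl; unfold Covers at hoq; omega) hop
  have hoq' := hM.nested_of_covers ho hq (by rintro rfl; unfold Covers at hop; omega) hoq
  exact ⟨o, ho, p, hp, q, hq, hop'.1, hpq, hoq'.2⟩

end IsLaminar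

noncomputable def outerStart (M : Finset (ℕ × ℕ)) (p : ℕ × ℕ) : ℕ :=
  sInf {n | ∃ o ∈ M, Covers o p ∧ o.1 = n}

theorem exists_outerStart {M : Finset (ℕ × ℕ)} {p : ℕ × ℕ} (hp : p ∈ M) :
    ∃ o ∈ M, Covers o p ∧ o.1 = outerStart M p :=
  Nat.sInf_mem (s := {n | ∃ o ∈ M, Covers o p ∧ o.1 = n}) ⟨p.1, p, hp, ⟨le_rfl, le_rfl⟩, rfl⟩

theorem outerStart_le {M : Finset (ℕ × ℕ)} {o p : ℕ × ℕ} (ho : o ∈ M) (hop : Covers o p) :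
    outerStart M p ≤ o.1 :=
  Nat.sInf_le ⟨o, ho, hop, rfl⟩

theorem IsLaminar.seriesOfNestedArcs {M : Finset (ℕ × ℕ)} (hM : IsLaminar M)
    (hfree : ¬ ContainsForbidden M) : SeriesOfNestedArcs M := by
  refine ⟨outerStart M, fun p hp q hq hpq => ⟨fun hg => ?_, fun hg => ?_⟩⟩
  all_goals
    obtain ⟨op, hop, hcovp, hstartp⟩ := exists_outerStart hp
    obtain ⟨oq, hoq, hcovq, hstartq⟩ := exists_outerStart hq
  · obtain rfl : op = oq := hM.eq_of_fst_eq hop hoq (by rw [hstartp, hstartq, hg])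
    rcases hM.nested_or_separated p hp q hq hpq with hn | hs
    · exact hn
    · exfalso
      rcases hs with hs | hs
      · exact hfree (hM.containsForbidden_of_covers hop hp hq hcovp hcovq hs)
      · exact hfree (hM.containsForbidden_of_covers hop hq hp hcovq hcovp hs)
  · have hne : op ≠ oq := by rintro rfl; exact hg (hstartp.symm.trans hstartq)
    -- If `oq` lay inside `op`, then `op` would cover `q` and start before `outerStart M q`.
    have hle_q := fun h : Covers op q => outerStart_le hop h
    have hle_p := fun h : Covers oq p => outerStart_le hoq h
    unfold Covers at hcovp hcovq hle_q hle_p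
    rcases hM.nested_or_separated op hop oq hoq hne with hn | hs
    · unfold Nested at hn; omega
    · unfold Separated at hs; omega

theorem SeriesOfNestedArcs.not_containsForbidden {M : Finset (ℕ × ℕ)}
    (hlt : ∀ p ∈ M, p.1 < p.2) (hM : SeriesOfNestedArcs M) : ¬ ContainsForbidden M := by
  obtain ⟨g, hg⟩ := hM
  rintro ⟨a, ha, b, hb, c, hc, hab, hbc, hca⟩
  have := hlt a ha
  have := hlt b hb
  have := hlt c hc
  have hgab : g a = g b := by
    by_contra hne
    rcases (hg a ha b hb (by rintro rfl; omega)).2 hne with h | h <;> omega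
  have hgac : g a = g c := by
    by_contra hne
    rcases (hg a ha c hc (by rintro rfl; omega)).2 hne with h | h <;> omega
  have hbc_nested := (hg b hb c hc (by rintro rfl; omega)).1 (hgab.symm.trans hgac)
  unfold Nested at hbc_nested
  omega

/-- A noncrossing perfect matching avoids the forbidden pattern iff it is a
series of nested arcs. -/
theorem stmt13 (k : ℕ) (M : Finset (ℕ × ℕ)) (h : IsNCPerfectMatching k M) :
    ¬ ContainsForbidden M ↔ SeriesOfNestedArcs M :=
  ⟨h.isLaminar.seriesOfNestedArcs,
    SeriesOfNestedArcs.not_containsForbidden h.isLaminar.fst_lt_snd⟩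
end
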